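/- The function ψ(z) = (φ(z)/Φ(z))·(z + φ(z)/Φ(z)) is strictly decreasing on ℝ, i.e., ψ'(z) < 0 for all z ∈ ℝ. -/

import Mathlib

open MeasureTheory Filter

noncomputable def phi (z : ℝ) : ℝ := (Real.sqrt (2 * Real.pi))⁻¹ * Real.exp (-z ^ 2 / 2)
noncomputable def Phi (z : ℝ) : ℝ := ∫ t in Set.Iic z, phi t
noncomputable def psi (z : ℝ) : ℝ := (phi z / Phi z) * (z + phi z / Phi z)

open Set

lemma phi_pos (z : ℝ) : 0 < phi z := by
  apply mul_pos (inv_pos.2 (Real.sqrt_pos.2 (by positivity))) (Real.exp_pos _)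

lemma continuous_phi : Continuous phi := by
  unfold phi; fun_prop

lemma integrable_phi : Integrable phi := by
  have h : Integrable (fun x : ℝ => Real.exp (-(1/2) * x ^ 2)) := integrable_exp_neg_mul_sq (by norm_num)
  have := h.const_mul (Real.sqrt (2 * Real.pi))⁻¹
  refine this.congr ?_
  filter_upwards with x
  unfold phi; ring_nf

lemma Phi_pos (z : ℝ) : 0 < Phi z := by
  rw [Phi]
  rw [setIntegral_pos_iff_support_of_nonneg_ae]
  · have : Function.support phi = Set.univ := by
      ext x; simp [Function.mem_support, (phi_pos x).ne']
    rw [this, Set.univ_inter]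
    simp [Real.volume_Iic]
  · filter_upwards with x using (phi_pos x).le
  · exact integrable_phi.integrableOn

lemma hasDerivAt_Phi (z : ℝ) : HasDerivAt Phi (phi z) z := by
  have key : ∀ w : ℝ, Phi w = Phi 0 + ∫ t in (0:ℝ)..w, phi t := by
    intro w
    rw [← intervalIntegral.integral_Iic_sub_Iic integrable_phi.integrableOn
      integrable_phi.integrableOn]
    unfold Phi; ring
  have h := (continuous_phi.integral_hasStrictDerivAt 0 z).hasDerivAt
  have h2 := (h.const_add (Phi 0))
  exact h2.congr_of_eventuallyEq (by filter_upwards with w using (key w))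

lemma Phi_tendsto_atBot : Tendsto Phi atBot (nhds 0) := by
  have h := intervalIntegral_tendsto_integral_Iic (μ := volume) (f := phi) (a := id) (l := atBot)
    0 integrable_phi.integrableOn tendsto_id
  have key : ∀ w : ℝ, Phi w = Phi 0 - ∫ t in w..(0:ℝ), phi t := by
    intro w
    rw [← intervalIntegral.integral_Iic_sub_Iic integrable_phi.integrableOn
      integrable_phi.integrableOn]
    unfold Phi; ring
  have : Tendsto (fun w => Phi 0 - ∫ t in w..(0:ℝ), phi t) atBot (nhds (Phi 0 - Phi 0)) := by
    exact (tendsto_const_nhds.sub h)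
  simpa using this.congr (fun w => (key w).symm)

noncomputable def sfn (z : ℝ) : ℝ := Real.sqrt (z^2 + 8)
noncomputable def cfn (z : ℝ) : ℝ := 4 / (sfn z - 3*z)
noncomputable def Efn (z : ℝ) : ℝ := Real.sqrt (2*Real.pi) * Phi z - cfn z * Real.exp (-z^2/2)

lemma sfn_pos (z : ℝ) : 0 < sfn z := Real.sqrt_pos.2 (by positivity)

lemma sfn_sq (z : ℝ) : sfn z ^ 2 = z^2 + 8 := Real.sq_sqrt (by positivity)

lemma dpos {z : ℝ} (hz : z < 1) : 0 < sfn z - 3*z := by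
  rcases le_or_gt z 0 with h | h
  · have := sfn_pos z; nlinarith
  · nlinarith [sq_nonneg (sfn z - 3*z), sfn_sq z, sfn_pos z]

lemma core_ineq (z : ℝ) : 0 < sfn z * (2 + z^2) + z * (z^2 + 6) := by
  have hs := sfn_pos z
  have hs2 := sfn_sq z
  have hA : 0 < sfn z * (2 + z^2) := by positivity
  rcases le_or_gt 0 (z * (z^2 + 6)) with h | h
  · linarith
  · have hid : (sfn z * (2+z^2))^2 = (z*(z^2+6))^2 + 32 := by
      rw [mul_pow, hs2]; ring
    have hAB : 0 < sfn z*(2+z^2) - z*(z^2+6) := by linarith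
    nlinarith [hid, hAB]

lemma hasDerivAt_sfn (z : ℝ) : HasDerivAt sfn (z / sfn z) z := by
  have h : HasDerivAt (fun z : ℝ => z^2 + 8) (2*z) z := by
    simpa using ((hasDerivAt_pow 2 z).add_const 8)
  have := h.sqrt (by positivity)
  refine this.congr_deriv ?_
  rw [show Real.sqrt (z^2+8) = sfn z from rfl]
  rw [mul_div_mul_left _ _ (two_ne_zero)]

lemma hasDerivAt_cfn {z : ℝ} (hz : z < 1) :
    HasDerivAt cfn (-(4 * (z / sfn z - 3)) / (sfn z - 3*z)^2) z := by
  have h : HasDerivAt (fun z => sfn z - 3*z) (z / sfn z - 3) z := by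
    exact ((hasDerivAt_sfn z).sub ((hasDerivAt_id' z).const_mul 3)).congr_deriv (by ring)
  have := (hasDerivAt_const z (4:ℝ)).div h (dpos hz).ne'
  refine this.congr_deriv ?_
  ring

lemma hasDerivAt_Efn {z : ℝ} (hz : z < 1) :
    HasDerivAt Efn (Real.sqrt (2*Real.pi) * phi z -
      ((-(4 * (z / sfn z - 3)) / (sfn z - 3*z)^2) * Real.exp (-z^2/2)
        + cfn z * (Real.exp (-z^2/2) * (-z)))) z := by
  have he : HasDerivAt (fun z : ℝ => Real.exp (-z^2/2)) (Real.exp (-z^2/2) * (-z)) z := by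
    have h1 : HasDerivAt (fun z : ℝ => -z^2/2) (-z) z := by
      have := ((hasDerivAt_pow 2 z).neg).div_const 2
      refine this.congr_deriv ?_; push_cast; ring
    exact h1.exp
  exact ((hasDerivAt_Phi z).const_mul _).sub (((hasDerivAt_cfn hz).mul he))

lemma Efn_deriv_neg {z : ℝ} (hz : z < 1) :
    Real.sqrt (2*Real.pi) * phi z -
      ((-(4 * (z / sfn z - 3)) / (sfn z - 3*z)^2) * Real.exp (-z^2/2)
        + cfn z * (Real.exp (-z^2/2) * (-z))) < 0 := by
  have hphi : Real.sqrt (2*Real.pi) * phi z = Real.exp (-z^2/2) := by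
    rw [phi]
    field_simp
  rw [hphi, cfn]
  have hd := dpos hz
  have hs := sfn_pos z
  have hs2 := sfn_sq z
  have he : 0 < Real.exp (-z^2/2) := Real.exp_pos _
  have hApos : 0 < sfn z * (sfn z - 3*z)^2 := by positivity
  have expand : (1 - -(4 * (z / sfn z - 3)) / (sfn z - 3*z)^2 + 4 / (sfn z - 3*z) * z)
      * (sfn z * (sfn z - 3*z)^2)
      = -(2 * (sfn z * (2 + z^2) + z * (z^2 + 6))) := by
    have e1 : (-(4 * (z / sfn z - 3)) / (sfn z - 3*z)^2) * (sfn z * (sfn z - 3*z)^2) = -(4*(z - 3*sfn z)) := by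
      field_simp [(show 0 < sfn z - z*3 by linarith).ne']
    have e2 : 4 / (sfn z - 3*z) * z * (sfn z * (sfn z - 3*z)^2) = 4*z*sfn z*(sfn z - 3*z) := by
      field_simp
    linear_combination -e1 + e2 + (sfn z - 2*z) * hs2
  have key : 1 - (-(4 * (z / sfn z - 3)) / (sfn z - 3*z)^2) + (4 / (sfn z - 3*z)) * z < 0 := by
    by_contra hX
    push_neg at hX
    nlinarith [core_ineq z, mul_nonneg hX hApos.le]
  nlinarith [mul_pos he (neg_pos.2 key)]

lemma Efn_strictAntiOn : StrictAntiOn Efn (Set.Iio 1) := by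
  apply strictAntiOn_of_deriv_neg (convex_Iio 1)
  · intro x hx
    exact ((hasDerivAt_Efn hx).differentiableAt).continuousAt.continuousWithinAt
  · intro x hx
    rw [interior_Iio] at hx
    rw [(hasDerivAt_Efn hx).deriv]
    exact Efn_deriv_neg hx

lemma Efn_tendsto : Tendsto Efn atBot (nhds 0) := by
  have hneg : Tendsto (fun z : ℝ => -z) atBot atTop := tendsto_neg_atBot_atTop
  have h1 : Tendsto (fun z => Real.sqrt (2*Real.pi) * Phi z) atBot (nhds (Real.sqrt (2*Real.pi) * 0)) :=
    Phi_tendsto_atBot.const_mul (Real.sqrt (2*Real.pi))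
  have hd : Tendsto (fun z : ℝ => sfn z - 3*z) atBot atTop := by
    have hbig : Tendsto (fun z : ℝ => -3*z) atBot atTop := by
      have h3 := hneg.const_mul_atTop (show (0:ℝ) < 3 by norm_num)
      exact h3.congr (fun z => by ring)
    apply tendsto_atTop_mono (fun z => ?_) hbig
    have := (sfn_pos z).le
    linarith
  have h2 : Tendsto cfn atBot (nhds 0) := by
    unfold cfn
    simpa [div_eq_mul_inv] using hd.inv_tendsto_atTop.const_mul 4
  have h3 : Tendsto (fun z : ℝ => Real.exp (-z^2/2)) atBot (nhds 0) := by
    apply Real.tendsto_exp_atBot.comp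
    have hsq : Tendsto (fun z : ℝ => z^2) atBot atTop := by
      have := (tendsto_pow_atTop (two_ne_zero)).comp hneg
      exact this.congr (fun z => by simp)
    have h5 := (hsq.atTop_div_const (show (0:ℝ) < 2 by norm_num))
    have h6 := tendsto_neg_atTop_atBot.comp h5
    exact h6.congr (fun z => by simp; ring)
  have h4 := h1.sub (h2.mul h3)
  rw [show Real.sqrt (2*Real.pi) * 0 - 0*0 = 0 by ring] at h4
  exact h4

lemma Efn_neg {z : ℝ} (hz : z < 1) : Efn z < 0 := by
  have hle : ∀ w : ℝ, w < 1 → Efn w ≤ 0 := by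
    intro w hw
    apply ge_of_tendsto Efn_tendsto
    filter_upwards [eventually_lt_atBot w] with u hu
    exact (Efn_strictAntiOn (Set.mem_Iio.2 ((hu.trans hw))) (Set.mem_Iio.2 hw) hu).le
  have h1 : Efn z < Efn (z - 1) :=
    Efn_strictAntiOn (Set.mem_Iio.2 (by linarith)) (Set.mem_Iio.2 hz) (by linarith)
  have h2 := hle (z-1) (by linarith)
  linarith

lemma mills {z : ℝ} (hz : z < 1) : (sfn z - 3*z) * Phi z < 4 * phi z := by
  have hE := Efn_neg hz
  unfold Efn cfn at hE
  have hd := dpos hz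
  have hs2pi : 0 < Real.sqrt (2*Real.pi) := Real.sqrt_pos.2 (by positivity)
  have hphiS : Real.sqrt (2*Real.pi) * phi z = Real.exp (-z^2/2) := by
    rw [phi]; field_simp
  rw [sub_neg, div_mul_eq_mul_div, lt_div_iff₀ hd] at hE
  rw [← mul_lt_mul_iff_of_pos_right hs2pi]
  nlinarith [hE, hphiS]

lemma keyq (z : ℝ) : 0 < 2*(phi z/Phi z)^2 + 3*z*(phi z/Phi z) + z^2 - 1 := by
  have hFpos : 0 < phi z / Phi z := div_pos (phi_pos z) (Phi_pos z)
  have hs2 := sfn_sq z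
  have hs := sfn_pos z
  rcases lt_or_ge z 1 with hz | hz
  · have hm := mills hz
    have hF2 : (sfn z - 3*z)/4 < phi z / Phi z := by
      rw [div_lt_div_iff₀ (by norm_num) (Phi_pos z)]
      linarith
    have hfac : 0 < (phi z/Phi z - (sfn z - 3*z)/4) * (phi z/Phi z + (3*z + sfn z)/4) := by
      apply mul_pos (by linarith)
      nlinarith
    nlinarith [hfac]
  · nlinarith [mul_pos hFpos hFpos]

lemma hasDerivAt_neg_sq_half (z : ℝ) : HasDerivAt (fun z : ℝ => -z^2/2) (-z) z := by
  have := ((hasDerivAt_pow 2 z).neg).div_const 2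
  refine this.congr_deriv ?_
  push_cast; ring

lemma hasDerivAt_phi (z : ℝ) : HasDerivAt phi (-z * phi z) z := by
  have := ((hasDerivAt_neg_sq_half z).exp).const_mul (Real.sqrt (2*Real.pi))⁻¹
  refine this.congr_deriv ?_
  unfold phi; ring

lemma hasDerivAt_psi (z : ℝ) : HasDerivAt psi
    ((phi z/Phi z) * (1 - (z + phi z/Phi z)*(z + 2*(phi z/Phi z)))) z := by
  have hΦ := hasDerivAt_Phi z
  have hφ := hasDerivAt_phi z
  have hF : HasDerivAt (fun z => phi z / Phi z)
      ((-z * phi z * Phi z - phi z * phi z)/(Phi z)^2) z := hφ.div hΦ (Phi_pos z).ne'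
  have h := hF.mul ((hasDerivAt_id z).add hF)
  have hne := (Phi_pos z).ne'
  refine h.congr_deriv ?_
  simp only [Pi.add_apply, id]
  field_simp
  ring

theorem stmt5 : StrictAnti psi ∧ ∀ z : ℝ, deriv psi z < 0 := by
  have hd : ∀ z, deriv psi z < 0 := by
    intro z
    rw [(hasDerivAt_psi z).deriv]
    have hF : 0 < phi z/Phi z := div_pos (phi_pos z) (Phi_pos z)
    have hq := keyq z
    nlinarith [mul_pos hF hq]
  exact ⟨strictAnti_of_deriv_neg hd, hd⟩
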